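/- arXiv:2402.18717 — 4 statements merged into one kernel-verified Lean document; each statement's English description precedes it below -/
import Mathlib

section
/- Let K be a field, I ⊊ K[x₁,...,x_k] a proper ideal, and I_lin the sub-ideal of I generated by all polynomials in I of degree at most 1. If f₁,...,f_r is any maximal I-linear sequence (a linear sequence of elements of I that cannot be extended), then I_lin = (f₁,...,f_r) as ideals of K[x₁,...,x_k]. -/
/-- A maximal `I`-linear sequence generates the ideal of all linear polynomials in `I`. -/
theorem stmt_3 (K : Type*) [Field K] (k r : ℕ)
    (I : Ideal (MvPolynomial (Fin k) K)) (hI : I ≠ ⊤)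
    (f : Fin r → MvPolynomial (Fin k) K)
    (hmem : ∀ i, f i ∈ I)
    (hlin : ∀ i : Fin r,
      (∃ g : MvPolynomial (Fin k) K, g.totalDegree ≤ 1 ∧
        f i - g ∈ Ideal.span (f '' {j | j < i})) ∧
      (∀ c : K, f i - MvPolynomial.C c ∉ Ideal.span (f '' {j | j < i})))
    (hmax : ¬ ∃ g ∈ I,
      (∃ h : MvPolynomial (Fin k) K, h.totalDegree ≤ 1 ∧
        g - h ∈ Ideal.span (Set.range f)) ∧
      (∀ c : K, g - MvPolynomial.C c ∉ Ideal.span (Set.range f))) :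
    Ideal.span {g | g ∈ I ∧ g.totalDegree ≤ 1} = Ideal.span (Set.range f) := by
  have hTI : Ideal.span (Set.range f) ≤ I := by
    rw [Ideal.span_le]; rintro _ ⟨i, rfl⟩; exact hmem i
  apply le_antisymm
  · rw [Ideal.span_le]
    rintro g ⟨hgI, hgd⟩
    by_contra hg
    apply hmax
    refine ⟨g, hgI, ⟨g, hgd, by simp⟩, ?_⟩
    intro c hc
    have hcI : MvPolynomial.C c ∈ I := by
      have := I.sub_mem hgI (hTI hc)
      simpa using this
    have hc0 : c = 0 := by
      by_contra h0
      exact hI (I.eq_top_of_isUnit_mem hcI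
        ((isUnit_map_iff _ _).2 (isUnit_iff_ne_zero.2 h0)))
    subst hc0
    simp only [map_zero, sub_zero] at hc
    exact hg hc
  · rw [Ideal.span_le]
    rintro _ ⟨i, rfl⟩
    have key : ∀ n : ℕ, ∀ i : Fin r, i.val = n →
        f i ∈ Ideal.span {g | g ∈ I ∧ g.totalDegree ≤ 1} := by
      intro n
      induction n using Nat.strong_induction_on with
      | _ n ih =>
        intro i hin
        obtain ⟨⟨g, hgd, hgm⟩, -⟩ := hlin i
        have hsub : Ideal.span (f '' {j | j < i}) ≤
            Ideal.span {g | g ∈ I ∧ g.totalDegree ≤ 1} := by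
          rw [Ideal.span_le]
          rintro _ ⟨j, hj, rfl⟩
          exact ih j.val (hin ▸ hj) j rfl
        have hsubI : Ideal.span (f '' {j | j < i}) ≤ I := by
          rw [Ideal.span_le]
          rintro _ ⟨j, _, rfl⟩
          exact hmem j
        have hgI : g ∈ I := by
          have := I.sub_mem (hmem i) (hsubI hgm)
          simpa using this
        have : f i = g + (f i - g) := by ring
        rw [this]
        exact Ideal.add_mem _ (Ideal.subset_span ⟨hgI, hgd⟩) (hsub hgm)
    exact key i.val i rfl
end

section
/- Let K be an algebraically closed field of characteristic 0, n ≥ 2, and r = (r₁,...,r_k) a tuple of positive integers with r₁+...+r_k = n. Let x^r = ∏ᵢ xᵢ^{rᵢ} ∈ K[x₁,...,x_k] and D = ∑ᵢ ∂/∂xᵢ. Then for 1 ≤ j ≤ n, the zero set V(x^r, D x^r, ..., D^{j−1} x^r) ⊆ K^k equals the union over 1 ≤ l ≤ j and over index sets i₁ < ... < i_l with r_{i₁}+...+r_{i_l} ≥ j of the intersections V(x_{i₁}) ∩ ... ∩ V(x_{i_l}). -/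
open Polynomial

private lemma aeval_sum_pderiv {K : Type*} [CommSemiring K] {k : ℕ} (a : Fin k → K)
    (p : MvPolynomial (Fin k) K) :
    MvPolynomial.aeval (fun i => Polynomial.X + Polynomial.C (a i))
        (∑ i, MvPolynomial.pderiv i p)
      = Polynomial.derivative
        (MvPolynomial.aeval (fun i => Polynomial.X + Polynomial.C (a i)) p) := by
  induction p using MvPolynomial.induction_on with
  | C c => simp
  | add p q hp hq => simp [map_add, Finset.sum_add_distrib, hp, hq]
  | mul_X p i hp =>
    have hx : ∑ i', MvPolynomial.pderiv i' (MvPolynomial.X i : MvPolynomial (Fin k) K)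
        = 1 := by
      simp [MvPolynomial.pderiv_X, Finset.sum_ite_eq]
    calc MvPolynomial.aeval (fun i => Polynomial.X + Polynomial.C (a i))
          (∑ i', MvPolynomial.pderiv i' (p * MvPolynomial.X i))
        = MvPolynomial.aeval (fun i => Polynomial.X + Polynomial.C (a i))
            ((∑ i', MvPolynomial.pderiv i' p) * MvPolynomial.X i + p) := by
          congr 1
          simp only [MvPolynomial.pderiv_mul, Finset.sum_add_distrib, Finset.sum_mul,
            ← Finset.mul_sum, hx, mul_one]
      _ = _ := by
          simp only [map_add, map_mul, MvPolynomial.aeval_X, hp, derivative_mul,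
            derivative_add, derivative_X, derivative_C, add_zero, mul_one]


private lemma eval_zero_aeval {K : Type*} [CommSemiring K] {k : ℕ} (a : Fin k → K)
    (p : MvPolynomial (Fin k) K) :
    Polynomial.eval 0 (MvPolynomial.aeval (fun i => Polynomial.X + Polynomial.C (a i)) p)
      = MvPolynomial.eval a p := by
  induction p using MvPolynomial.induction_on with
  | C c => simp
  | add p q hp hq => simp [hp, hq]
  | mul_X p i hp => simp [hp]

/-- Description of the K-rational points of the higher D-subschemes of the
principal monomial scheme defined by `x^r = ∏ xᵢ^{rᵢ}`. -/
theorem stmt_4 (K : Type*) [Field K] [IsAlgClosed K] [CharZero K]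
    (n k : ℕ) (hn : 2 ≤ n) (r : Fin k → ℕ) (hr : ∀ i, 0 < r i)
    (hsum : ∑ i, r i = n) (j : ℕ) (hj1 : 1 ≤ j) (hjn : j ≤ n) :
    {a : Fin k → K | ∀ m < j,
        MvPolynomial.eval a
          ((fun g => ∑ i, MvPolynomial.pderiv i g)^[m]
            (∏ i, MvPolynomial.X i ^ r i)) = 0} =
      ⋃ s ∈ {s : Finset (Fin k) | 1 ≤ s.card ∧ s.card ≤ j ∧ j ≤ ∑ i ∈ s, r i},
        {a : Fin k → K | ∀ i ∈ s, a i = 0} := by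
  classical
  ext a
  simp only [Set.mem_setOf_eq, Set.mem_iUnion, exists_prop]
  set Z : Finset (Fin k) := Finset.univ.filter (fun i => a i = 0) with hZ
  set m₀ : ℕ := ∑ i ∈ Z, r i with hm₀
  set q : Polynomial K := ∏ i, (Polynomial.X + Polynomial.C (a i)) ^ r i with hq
  set u : Polynomial K := ∏ i ∈ Finset.univ.filter (fun i => ¬ a i = 0),
      (Polynomial.X + Polynomial.C (a i)) ^ r i with hu
  have hqu : q = Polynomial.X ^ m₀ * u := by
    rw [hq, ← Finset.prod_filter_mul_prod_filter_not Finset.univ (fun i => a i = 0)]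
    congr 1
    rw [Finset.prod_congr rfl
      (fun i hi => by rw [(Finset.mem_filter.mp hi).2, map_zero, add_zero]),
      Finset.prod_pow_eq_pow_sum]
  have hu0 : Polynomial.eval 0 u ≠ 0 := by
    rw [hu, Polynomial.eval_prod]
    refine Finset.prod_ne_zero_iff.mpr fun i hi => ?_
    have hai : a i ≠ 0 := (Finset.mem_filter.mp hi).2
    simp [hai]
  have hiter : ∀ m, MvPolynomial.eval a ((fun g => ∑ i, MvPolynomial.pderiv i g)^[m]
      (∏ i, MvPolynomial.X i ^ r i)) = Polynomial.eval 0 (Polynomial.derivative^[m] q) := by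
    intro m
    have h1 : MvPolynomial.aeval (fun i => Polynomial.X + Polynomial.C (a i))
        ((fun g => ∑ i, MvPolynomial.pderiv i g)^[m]
          (∏ i, MvPolynomial.X i ^ r i : MvPolynomial (Fin k) K))
        = Polynomial.derivative^[m] q := by
      induction m with
      | zero =>
        simp only [Function.iterate_zero, id_eq]
        rw [map_prod, hq]
        simp
      | succ m ih =>
        rw [Function.iterate_succ_apply', Function.iterate_succ_apply', ← ih]
        exact aeval_sum_pderiv a _
    rw [← eval_zero_aeval a, h1]
  have hcoeff : ∀ m, Polynomial.eval 0 (Polynomial.derivative^[m] q)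
      = (m.factorial : K) * q.coeff m := by
    intro m
    rw [← Polynomial.coeff_zero_eq_eval_zero, Polynomial.coeff_iterate_derivative,
      zero_add, Nat.descFactorial_self, nsmul_eq_mul]
  have hfac : ∀ m : ℕ, (m.factorial : K) ≠ 0 :=
    fun m => Nat.cast_ne_zero.mpr m.factorial_ne_zero
  have key : (∀ m < j, MvPolynomial.eval a ((fun g => ∑ i, MvPolynomial.pderiv i g)^[m]
      (∏ i, MvPolynomial.X i ^ r i)) = 0) ↔ j ≤ m₀ := by
    constructor
    · intro h
      by_contra hlt
      push_neg at hlt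
      have h2 := h m₀ hlt
      rw [hiter, hcoeff] at h2
      have h3 : q.coeff m₀ = 0 := by
        rcases mul_eq_zero.mp h2 with h' | h'
        · exact absurd h' (hfac m₀)
        · exact h'
      rw [hqu] at h3
      have h4 : (Polynomial.X ^ m₀ * u).coeff (0 + m₀) = u.coeff 0 := by
        rw [mul_comm, Polynomial.coeff_mul_X_pow]
      rw [zero_add] at h4
      rw [h4, Polynomial.coeff_zero_eq_eval_zero] at h3
      exact hu0 h3
    · intro h m hm
      rw [hiter, hcoeff]
      have hdvd : Polynomial.X ^ j ∣ q := by
        rw [hqu]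
        exact dvd_mul_of_dvd_left (pow_dvd_pow _ h) u
      rw [Polynomial.X_pow_dvd_iff.mp hdvd m hm, mul_zero]
  rw [key]
  constructor
  · intro h
    by_cases hc : j ≤ Z.card
    · obtain ⟨s, hsZ, hscard⟩ := Finset.exists_subset_card_eq hc
      refine ⟨s, ⟨?_, ?_, ?_⟩, fun i hi => (Finset.mem_filter.mp (hsZ hi)).2⟩
      · rw [hscard]; exact hj1
      · rw [hscard]
      · have := Finset.card_nsmul_le_sum s r 1 (fun i _ => hr i)
        simpa [hscard] using this
    · push_neg at hc
      have hZne : Z.Nonempty := by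
        rcases Finset.eq_empty_or_nonempty Z with he | hne
        · rw [hm₀, he, Finset.sum_empty] at h
          omega
        · exact hne
      exact ⟨Z, ⟨Finset.card_pos.mpr hZne, le_of_lt hc, h⟩,
        fun i hi => (Finset.mem_filter.mp hi).2⟩
  · rintro ⟨s, ⟨hs1, hs2, hs3⟩, hs0⟩
    have hsub : s ⊆ Z := fun i hi => Finset.mem_filter.mpr ⟨Finset.mem_univ i, hs0 i hi⟩
    exact hs3.trans (Finset.sum_le_sum_of_subset hsub)
end

section
/- Let K be an algebraically closed field of characteristic 0, r = (r₁,...,r_k) positive integers summing to n ≥ 2, x^r = ∏ᵢ xᵢ^{rᵢ}, and D = ∑ᵢ ∂/∂xᵢ. Then for any 0 ≤ m ≤ n−1 and any index j, the hyperplane V(x_j) ⊆ K^k is contained in V(x^r, D^m x^r) if and only if r_j ≥ m+1. -/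
open Polynomial

noncomputable def sub1 {K : Type*} [CommSemiring K] {k : ℕ} (a : Fin k → K) :
    MvPolynomial (Fin k) K →ₐ[K] K[X] :=
  MvPolynomial.aeval (fun i => Polynomial.C (a i) + Polynomial.X)

lemma sub1_X {K : Type*} [CommSemiring K] {k : ℕ} (a : Fin k → K) (i : Fin k) :
    sub1 a (MvPolynomial.X i) = Polynomial.C (a i) + Polynomial.X := by
  simp [sub1]

lemma sub1_D {K : Type*} [CommRing K] {k : ℕ} (a : Fin k → K) (g : MvPolynomial (Fin k) K) :
    sub1 a (∑ i, MvPolynomial.pderiv i g) = Polynomial.derivative (sub1 a g) := by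
  induction g using MvPolynomial.induction_on with
  | C c => simp [sub1]
  | add p q hp hq =>
      simp only [map_add, Finset.sum_add_distrib] at *
      rw [hp, hq]
  | mul_X p i hp =>
      have : ∀ i' : Fin k, MvPolynomial.pderiv i' (p * MvPolynomial.X i) =
          MvPolynomial.pderiv i' p * MvPolynomial.X i
            + p * MvPolynomial.pderiv i' (MvPolynomial.X i) := by
        intro i'; rw [MvPolynomial.pderiv_mul]
      simp only [this]
      rw [Finset.sum_add_distrib, map_add, ← Finset.sum_mul, map_mul, ← Finset.mul_sum]
      have h1 : (∑ i' : Fin k, MvPolynomial.pderiv i' (MvPolynomial.X i : MvPolynomial (Fin k) K)) = 1 := by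
        rw [Finset.sum_eq_single i] <;> simp +contextual [MvPolynomial.pderiv_X, Pi.single_apply]
      rw [h1, map_mul, hp, map_one, mul_one, map_mul, sub1_X, derivative_mul]
      simp [mul_comm]

lemma eval_sub1 {K : Type*} [CommSemiring K] {k : ℕ} (a : Fin k → K) (g : MvPolynomial (Fin k) K) :
    Polynomial.eval 0 (sub1 a g) = MvPolynomial.eval a g := by
  induction g using MvPolynomial.induction_on with
  | C c => simp [sub1]
  | add p q hp hq => simp [hp, hq]
  | mul_X p i hp => simp [hp, sub1_X]

lemma sub1_iterD {K : Type*} [CommRing K] {k : ℕ} (a : Fin k → K) (m : ℕ)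
    (g : MvPolynomial (Fin k) K) :
    sub1 a ((fun g => ∑ i, MvPolynomial.pderiv i g)^[m] g)
      = Polynomial.derivative^[m] (sub1 a g) := by
  induction m generalizing g with
  | zero => rfl
  | succ m ih =>
      rw [Function.iterate_succ_apply, ih, sub1_D, ← Function.iterate_succ_apply]

lemma eval_iterD {K : Type*} [CommRing K] {k : ℕ} (a : Fin k → K) (m : ℕ)
    (g : MvPolynomial (Fin k) K) :
    MvPolynomial.eval a ((fun g => ∑ i, MvPolynomial.pderiv i g)^[m] g)
      = Nat.factorial m • (sub1 a g).coeff m := by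
  rw [← eval_sub1, sub1_iterD, ← Polynomial.coeff_zero_eq_eval_zero,
    Polynomial.coeff_iterate_derivative, zero_add, Nat.descFactorial_self]

/-- `V(x_j) ⊆ V(x^r, D^m x^r)` iff `r_j ≥ m + 1`. -/
theorem stmt_5 (K : Type*) [Field K] [IsAlgClosed K] [CharZero K]
    (n k : ℕ) (hn : 2 ≤ n) (r : Fin k → ℕ) (hr : ∀ i, 0 < r i)
    (hsum : ∑ i, r i = n) (m : ℕ) (hm : m ≤ n - 1) (j : Fin k) :
    (∀ a : Fin k → K, a j = 0 →
        MvPolynomial.eval a (∏ i, MvPolynomial.X i ^ r i) = 0 ∧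
        MvPolynomial.eval a
          ((fun g => ∑ i, MvPolynomial.pderiv i g)^[m]
            (∏ i, MvPolynomial.X i ^ r i)) = 0) ↔
      m + 1 ≤ r j := by
  have hfact : ∀ a : Fin k → K, a j = 0 →
      sub1 a (∏ i, MvPolynomial.X i ^ r i)
        = X ^ r j * ∏ i ∈ Finset.univ.erase j, (C (a i) + X) ^ r i := by
    intro a haj
    have : sub1 a (∏ i, MvPolynomial.X i ^ r i)
        = ∏ i, (C (a i) + X) ^ r i := by
      rw [map_prod]
      exact Finset.prod_congr rfl fun i _ => by rw [map_pow, sub1_X]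
    rw [this, ← Finset.mul_prod_erase Finset.univ _ (Finset.mem_univ j), haj,
      map_zero, zero_add]
  constructor
  · intro H
    by_contra hc
    have hrm : r j ≤ m := by omega
    set a : Fin k → K := Function.update (fun _ => (1 : K)) j 0 with ha
    have haj : a j = 0 := Function.update_self j 0 _
    have h2 := (H a haj).2
    rw [eval_iterD, hfact a haj] at h2
    have hprod : (∏ i ∈ Finset.univ.erase j, (C (a i) + X) ^ r i : K[X])
        = (1 + X) ^ (n - r j) := by
      have h1 : ∀ i ∈ Finset.univ.erase j, (C (a i) + X) ^ r i = (1 + X) ^ r i := by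
        intro i hi
        rw [ha]
        rw [Function.update_of_ne (Finset.ne_of_mem_erase hi), map_one]
      rw [Finset.prod_congr rfl h1, Finset.prod_pow_eq_pow_sum]
      congr 1
      have := Finset.add_sum_erase Finset.univ r (Finset.mem_univ j)
      omega
    rw [hprod, Polynomial.coeff_X_pow_mul', if_pos hrm,
      Polynomial.coeff_one_add_X_pow] at h2
    have hne : (((Nat.factorial m) * (n - r j).choose (m - r j) : ℕ) : K) ≠ 0 := by
      rw [Nat.cast_ne_zero]
      have : 0 < (n - r j).choose (m - r j) :=
        Nat.choose_pos (by omega)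
      positivity
    rw [nsmul_eq_mul, ← Nat.cast_mul] at h2
    exact absurd h2 hne
  · intro hle a haj
    constructor
    · rw [MvPolynomial.eval_prod]
      refine Finset.prod_eq_zero (Finset.mem_univ j) ?_
      rw [map_pow, MvPolynomial.eval_X, haj, zero_pow (hr j).ne']
    · rw [eval_iterD, hfact a haj, Polynomial.coeff_X_pow_mul', if_neg (by omega),
        smul_zero]
end

section
/- Let K be an algebraically closed field, n ≥ 2, f(X) = ∏ᵢ₌₁ⁿ(X − αᵢ) ∈ K[X] monic of degree n, and fᵢ its i-th Hasse–Schmidt derivative. Suppose gcd(f, fᵢ) ≠ 1 for all 1 ≤ i ≤ n−1. Then for every λ, α ∈ K, the polynomial g(X) = ∏ᵢ₌₁ⁿ(X − (λαᵢ + α)) also satisfies gcd(g, gᵢ) ≠ 1 for all 1 ≤ i ≤ n−1. -/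
open Polynomial

private lemma coeff_prod_scale {K : Type*} [Field K] (n : ℕ) (γ : Fin n → K) (c : K)
    (i : ℕ) (hi : i ≤ n) :
    (∏ l, (X - C (c * γ l))).coeff i = c ^ (n - i) * (∏ l, (X - C (γ l))).coeff i := by
  have hcard : (Multiset.card ((Finset.univ.val.map γ))) = n := by simp
  have h1 : (∏ l, (X - C (c * γ l))) =
      (((Finset.univ.val.map γ).map (fun t => c * t)).map (fun t => X - C t)).prod := by
    rw [Multiset.map_map, Multiset.map_map]
    rfl
  have h2 : (∏ l, (X - C (γ l))) =
      ((Finset.univ.val.map γ).map (fun t => X - C t)).prod := by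
    rw [Multiset.map_map]
    rfl
  rw [h1, h2, Multiset.prod_X_sub_C_coeff _ (by simp [hi]),
    Multiset.prod_X_sub_C_coeff _ (by simp [hi])]
  simp only [Multiset.card_map, hcard]
  have := Multiset.pow_smul_esymm c (n - i) (Finset.univ.val.map γ)
  rw [smul_eq_mul] at this
  have hmap : ((Finset.univ.val.map γ).map (c • ·)) =
      ((Finset.univ.val.map γ).map (fun t => c * t)) := by
    simp [smul_eq_mul]
  rw [hmap] at this
  rw [← this]
  ring

/-- Affine invariance of the Casas-Alvero conditions: if
`f = ∏(X - αᵢ)` has `gcd(f, fᵢ) ≠ 1` for `1 ≤ i ≤ n-1`, then so does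
`g = ∏(X - (λαᵢ + α))`. -/
theorem stmt_16 (K : Type*) [Field K] [IsAlgClosed K] (n : ℕ) (hn : 2 ≤ n)
    (α : Fin n → K)
    (hf : ∀ i : ℕ, 1 ≤ i → i ≤ n - 1 →
      ¬ IsCoprime (∏ l, (Polynomial.X - Polynomial.C (α l)))
        (Polynomial.hasseDeriv i (∏ l, (Polynomial.X - Polynomial.C (α l)))))
    (lam a : K) :
    ∀ i : ℕ, 1 ≤ i → i ≤ n - 1 →
      ¬ IsCoprime (∏ l, (Polynomial.X - Polynomial.C (lam * α l + a)))
        (Polynomial.hasseDeriv i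
          (∏ l : Fin n, (Polynomial.X - Polynomial.C (lam * α l + a)))) := by
  classical
  intro i hi1 hi2 hcop
  set f : K[X] := ∏ l, (X - C (α l)) with hfdef
  set g : K[X] := ∏ l, (X - C (lam * α l + a)) with hgdef
  have hin : i ≤ n := le_trans hi2 (Nat.sub_le n 1)
  -- f ≠ 0
  have hf0 : f ≠ 0 := by
    apply Finset.prod_ne_zero_iff.2
    intro l _
    exact X_sub_C_ne_zero _
  -- get a common root β of f and hasseDeriv i f
  obtain ⟨β, hβf, hβd⟩ : ∃ β, f.eval β = 0 ∧ (hasseDeriv i f).eval β = 0 := by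
    have h := hf i hi1 hi2
    set d := EuclideanDomain.gcd f (hasseDeriv i f) with hd
    have hdu : ¬ IsUnit d := fun hu => h (EuclideanDomain.gcd_isUnit_iff.1 hu)
    have hd0 : d ≠ 0 := by
      intro h0
      exact hf0 (EuclideanDomain.gcd_eq_zero_iff.1 (hd ▸ h0)).1
    have hdeg : d.degree ≠ 0 := fun h0 => hdu (isUnit_iff_degree_eq_zero.2 h0)
    obtain ⟨β, hβ⟩ := IsAlgClosed.exists_root d hdeg
    exact ⟨β, eval_eq_zero_of_dvd_of_eval_eq_zero (EuclideanDomain.gcd_dvd_left _ _) hβ,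
      eval_eq_zero_of_dvd_of_eval_eq_zero (EuclideanDomain.gcd_dvd_right _ _) hβ⟩
  set y : K := lam * β + a with hy
  -- y is a root of g
  have hgy : g.eval y = 0 := by
    rw [hfdef, eval_prod] at hβf
    obtain ⟨l, _, hl⟩ := Finset.prod_eq_zero_iff.1 hβf
    have hβl : β = α l := by
      simp only [eval_sub, eval_X, eval_C, sub_eq_zero] at hl
      exact hl
    rw [hgdef, eval_prod]
    apply Finset.prod_eq_zero (Finset.mem_univ l)
    simp [hy, hβl]
  -- y is a root of hasseDeriv i g
  have hgd : (hasseDeriv i g).eval y = 0 := by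
    rw [← taylor_coeff]
    have ht : taylor y g = ∏ l, (X - C (lam * (α l - β))) := by
      rw [hgdef, taylor_apply]
      rw [prod_comp]
      apply Finset.prod_congr rfl
      intro l _
      simp only [sub_comp, X_comp, C_comp]
      rw [hy, add_sub_assoc, ← C_sub]
      rw [sub_eq_add_neg X, ← C_neg]
      congr 2
      ring
    have ht' : taylor β f = ∏ l, (X - C (α l - β)) := by
      rw [hfdef, taylor_apply, prod_comp]
      apply Finset.prod_congr rfl
      intro l _
      simp only [sub_comp, X_comp, C_comp]
      rw [add_sub_assoc, ← C_sub]
      rw [sub_eq_add_neg X, ← C_neg]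
      congr 2
      ring
    rw [ht, coeff_prod_scale n _ lam i hin, ← ht', taylor_coeff, hβd, mul_zero]
  -- contradiction with coprimality
  obtain ⟨u, v, huv⟩ := hcop
  have := congrArg (eval y) huv
  simp only [eval_add, eval_mul, hgy, hgd, mul_zero, eval_one, add_zero] at this
  exact one_ne_zero this.symm
end
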